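/- Let n ≥ 2 be an integer and ε > 0 a real number. With C_α = e_α(1, 1/2, ..., 1/n), B_γ the coefficients from ∏_{l=1}^{n}(Σ_{j=0}^{n}(h/l)^j)^{n+2}, N = n+n²−1, D_l = (2+(2+ε)l)·binom(N,l)·2^{l−1}, and R_α = C_α·(B_{n−α} + Σ_{l=1}^{n−α} D_l·B_{n−α−l}), one has R_{n−1} ≤ 9 n⁴ (1 + ε/4) · R_n, and R_{α−1} ≤ (27/2) n⁴ · R_α for all 1 ≤ α ≤ n−1. -/

import Mathlib

/-- `C α = e_α(1, 1/2, ..., 1/n)`. -/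
noncomputable def Ccoeff (n α : ℕ) : ℝ :=
  ∑ s ∈ Finset.powersetCard α (Finset.Icc 1 n), ∏ l ∈ s, ((l : ℝ))⁻¹

/-- `B γ` : the coefficient of `h^γ` in `∏_{l=1}^{n} (Σ_{j=0}^{n} (h/l)^j)^{n+2}`. -/
noncomputable def Bcoeff (n γ : ℕ) : ℝ :=
  Polynomial.coeff
    (∏ l ∈ Finset.Icc 1 n,
      (∑ j ∈ Finset.range (n + 1), (Polynomial.C ((l : ℝ)⁻¹) * Polynomial.X) ^ j) ^ (n + 2)) γ

/-- `D l = (2 + (2+ε)l)·binom(N,l)·2^{l-1}` with `N = n + n² - 1`. -/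
noncomputable def Dcoeff (n : ℕ) (ε : ℝ) (l : ℕ) : ℝ :=
  (2 + (2 + ε) * l) * ((n + n ^ 2 - 1).choose l : ℝ) * 2 ^ (l - 1)

/-- `R α = C α (B_{n-α} + Σ_{l=1}^{n-α} D_l B_{n-α-l})`. -/
noncomputable def Rcoeff (n : ℕ) (ε : ℝ) (α : ℕ) : ℝ :=
  Ccoeff n α * (Bcoeff n (n - α) +
    ∑ l ∈ Finset.Icc 1 (n - α), Dcoeff n ε l * Bcoeff n (n - α - l))


open Polynomial Finset

-- nonneg of product coeffs
lemma aux_mul_nonneg {P Q : Polynomial ℝ}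
    (hP0 : ∀ k, 0 ≤ P.coeff k) (hQ0 : ∀ k, 0 ≤ Q.coeff k) (k : ℕ) :
    0 ≤ (P * Q).coeff k := by
  rw [Polynomial.coeff_mul]
  exact Finset.sum_nonneg fun p _ => mul_nonneg (hP0 _) (hQ0 _)

lemma aux_ratio_mul {P Q : Polynomial ℝ} {a b : ℝ} (hb : 0 ≤ b)
    (hP0 : ∀ k, 0 ≤ P.coeff k) (hQ0 : ∀ k, 0 ≤ Q.coeff k)
    (hP : ∀ k, P.coeff (k+1) ≤ a * P.coeff k)
    (hQ : ∀ k, Q.coeff (k+1) ≤ b * Q.coeff k) (k : ℕ) :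
    (P * Q).coeff (k+1) ≤ (a + b) * (P * Q).coeff k := by
  rw [Polynomial.coeff_mul, Polynomial.coeff_mul, Finset.Nat.sum_antidiagonal_succ]; dsimp only
  have h1 : P.coeff 0 * Q.coeff (k+1) ≤ b * (P.coeff 0 * Q.coeff k) := by
    have := mul_le_mul_of_nonneg_left (hQ k) (hP0 0); linarith [this]
  have h2 : ∑ p ∈ Finset.HasAntidiagonal.antidiagonal k, P.coeff (p.1 + 1) * Q.coeff p.2
      ≤ a * ∑ p ∈ Finset.HasAntidiagonal.antidiagonal k, P.coeff p.1 * Q.coeff p.2 := by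
    rw [Finset.mul_sum]
    refine Finset.sum_le_sum fun p _ => ?_
    have := mul_le_mul_of_nonneg_right (hP p.1) (hQ0 p.2)
    linarith [this]
  have h3 : P.coeff 0 * Q.coeff k ≤ ∑ p ∈ Finset.HasAntidiagonal.antidiagonal k, P.coeff p.1 * Q.coeff p.2 := by
    have : ((0 : ℕ), k) ∈ Finset.HasAntidiagonal.antidiagonal k := by simp
    exact Finset.single_le_sum (f := fun p : ℕ × ℕ => P.coeff p.1 * Q.coeff p.2)
      (fun p _ => mul_nonneg (hP0 _) (hQ0 _)) this
  have h4 : b * (P.coeff 0 * Q.coeff k) ≤ b * ∑ p ∈ Finset.HasAntidiagonal.antidiagonal k, P.coeff p.1 * Q.coeff p.2 :=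
    mul_le_mul_of_nonneg_left h3 hb
  nlinarith [h1, h2, h4]

lemma aux_ratio_prod {ι : Type*} (s : Finset ι) (f : ι → Polynomial ℝ) (a : ι → ℝ)
    (h0 : ∀ i ∈ s, ∀ k, 0 ≤ (f i).coeff k) (ha : ∀ i ∈ s, 0 ≤ a i)
    (hr : ∀ i ∈ s, ∀ k, (f i).coeff (k+1) ≤ a i * (f i).coeff k) :
    (∀ k, 0 ≤ (∏ i ∈ s, f i).coeff k) ∧
    (∀ k, (∏ i ∈ s, f i).coeff (k+1) ≤ (∑ i ∈ s, a i) * (∏ i ∈ s, f i).coeff k) := by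
  induction s using Finset.cons_induction with
  | empty =>
    constructor
    · intro k; rw [Finset.prod_empty]; by_cases h : k = 0 <;> simp [h, Polynomial.coeff_one]
    · intro k; simp [Polynomial.coeff_one]
  | cons i s his ih =>
    obtain ⟨ih0, ihr⟩ := ih (fun j hj => h0 j (Finset.mem_cons_of_mem hj))
      (fun j hj => ha j (Finset.mem_cons_of_mem hj))
      (fun j hj => hr j (Finset.mem_cons_of_mem hj))
    rw [Finset.prod_cons, Finset.sum_cons]
    have hi0 := h0 i (Finset.mem_cons_self i s)
    constructor
    · exact aux_mul_nonneg hi0 ih0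
    · intro k
      exact aux_ratio_mul (Finset.sum_nonneg fun j hj => ha j (Finset.mem_cons_of_mem hj))
        hi0 ih0 (hr i (Finset.mem_cons_self i s)) ihr k

lemma geom_coeff (c : ℝ) (n k : ℕ) :
    (∑ j ∈ Finset.range (n+1), (Polynomial.C c * Polynomial.X) ^ j).coeff k
      = if k ≤ n then c ^ k else 0 := by
  rw [Polynomial.finset_sum_coeff]
  have : ∀ j, ((Polynomial.C c * Polynomial.X) ^ j).coeff k = if k = j then c ^ j else 0 := by
    intro j
    rw [mul_pow, ← Polynomial.C_pow, Polynomial.coeff_C_mul, Polynomial.coeff_X_pow]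
    split <;> simp_all
  simp only [this]
  rw [Finset.sum_ite_eq (Finset.range (n+1)) k (fun j => c ^ j)]
  simp [Nat.lt_succ_iff]

lemma Bfactor_props (n : ℕ) (l : ℕ) (hl : 1 ≤ l) :
    (∀ k, 0 ≤ ((∑ j ∈ Finset.range (n+1), (Polynomial.C ((l:ℝ)⁻¹) * Polynomial.X) ^ j) ^ (n+2)).coeff k) ∧
    (∀ k, ((∑ j ∈ Finset.range (n+1), (Polynomial.C ((l:ℝ)⁻¹) * Polynomial.X) ^ j) ^ (n+2)).coeff (k+1)
      ≤ ((n:ℝ)+2) * ((∑ j ∈ Finset.range (n+1), (Polynomial.C ((l:ℝ)⁻¹) * Polynomial.X) ^ j) ^ (n+2)).coeff k) := by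
  have hc0 : (0:ℝ) ≤ (l:ℝ)⁻¹ := by positivity
  have hc1 : (l:ℝ)⁻¹ ≤ 1 := by
    rw [inv_le_one_iff₀]; right; exact_mod_cast Nat.one_le_cast.mpr hl
  set Q := ∑ j ∈ Finset.range (n+1), (Polynomial.C ((l:ℝ)⁻¹) * Polynomial.X) ^ j with hQ
  have hq0 : ∀ k, 0 ≤ Q.coeff k := by
    intro k; rw [hQ, geom_coeff]; split <;> positivity
  have hqr : ∀ k, Q.coeff (k+1) ≤ 1 * Q.coeff k := by
    intro k; rw [hQ, geom_coeff, geom_coeff, one_mul]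
    split
    · rename_i h
      rw [if_pos (by omega)]
      exact pow_le_pow_of_le_one hc0 hc1 (by omega)
    · split
      · positivity
      · exact le_refl _
  have := aux_ratio_prod (Finset.range (n+2)) (fun _ => Q) (fun _ => 1)
    (fun _ _ => hq0) (fun _ _ => zero_le_one) (fun _ _ => hqr)
  rw [Finset.prod_const, Finset.sum_const, Finset.card_range, nsmul_eq_mul] at this
  obtain ⟨h0, hr⟩ := this
  refine ⟨h0, fun k => ?_⟩
  have := hr k
  push_cast at this ⊢
  convert this using 2 <;> ring


lemma Bprops (n : ℕ) :
    (∀ γ, 0 ≤ Bcoeff n γ) ∧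
    (∀ γ, Bcoeff n (γ+1) ≤ ((n:ℝ) * ((n:ℝ)+2)) * Bcoeff n γ) := by
  have := aux_ratio_prod (Finset.Icc 1 n)
    (fun l => (∑ j ∈ Finset.range (n+1), (Polynomial.C ((l:ℝ)⁻¹) * Polynomial.X) ^ j) ^ (n+2))
    (fun _ => (n:ℝ)+2)
    (fun l hl => (Bfactor_props n l (Finset.mem_Icc.mp hl).1).1)
    (fun l _ => by positivity)
    (fun l hl => (Bfactor_props n l (Finset.mem_Icc.mp hl).1).2)
  rw [Finset.sum_const, Nat.card_Icc, nsmul_eq_mul] at this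
  obtain ⟨h0, hr⟩ := this
  refine ⟨fun γ => h0 γ, fun γ => ?_⟩
  have := hr γ
  simpa [Bcoeff, Nat.add_sub_cancel] using this

lemma Cprops (n : ℕ) (hn : 1 ≤ n) :
    (∀ α, 0 ≤ Ccoeff n α) ∧
    (∀ α, 1 ≤ α → α ≤ n → Ccoeff n (α - 1) ≤ (n:ℝ)^2 * Ccoeff n α) := by
  constructor
  · intro α
    refine Finset.sum_nonneg fun s _ => Finset.prod_nonneg fun l _ => by positivity
  · intro α hα1 hαn
    have hcard : (Finset.Icc 1 n).card = n := by rw [Nat.card_Icc]; omega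
    have key := aux_ratio_prod (Finset.Icc 1 n)
      (fun l => Polynomial.X + Polynomial.C ((l:ℝ)⁻¹)) (fun l => (l:ℝ))
      (fun l hl k => by
        rcases k with _ | _ | k <;>
          simp [Polynomial.coeff_add, Polynomial.coeff_X, Polynomial.coeff_C] <;> positivity)
      (fun l _ => by positivity)
      (fun l hl k => by
        have hl1 : 1 ≤ l := (Finset.mem_Icc.mp hl).1
        have hlR : (1:ℝ) ≤ (l:ℝ) := by exact_mod_cast hl1
        rcases k with _ | k
        · simp [Polynomial.coeff_add, Polynomial.coeff_X, Polynomial.coeff_C]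
          rw [mul_inv_cancel₀ (by positivity)]
        · have hz : (Polynomial.X + Polynomial.C ((l:ℝ)⁻¹)).coeff (k+1+1) = 0 := by
            simp [Polynomial.coeff_add, Polynomial.coeff_X, Polynomial.coeff_C]
          have h0' : 0 ≤ (Polynomial.X + Polynomial.C ((l:ℝ)⁻¹)).coeff (k+1) := by
            rcases k with _ | k <;>
              simp [Polynomial.coeff_add, Polynomial.coeff_X, Polynomial.coeff_C] <;> positivity
          rw [hz]
          exact mul_nonneg (by positivity) h0')
    obtain ⟨h0, hr⟩ := key
    have hvieta : ∀ β, β ≤ n → Ccoeff n β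
        = (∏ l ∈ Finset.Icc 1 n, (Polynomial.X + Polynomial.C ((l:ℝ)⁻¹))).coeff (n - β) := by
      intro β hβ
      rw [Finset.prod_X_add_C_coeff _ _ (by rw [hcard]; omega)]
      rw [hcard]
      congr 1
      omega
    have e1 : Ccoeff n (α - 1)
        = (∏ l ∈ Finset.Icc 1 n, (Polynomial.X + Polynomial.C ((l:ℝ)⁻¹))).coeff ((n - α) + 1) := by
      rw [hvieta (α - 1) (by omega)]; congr 1; omega
    have e2 := hvieta α hαn
    rw [e1, e2]
    have hsum : ∑ l ∈ Finset.Icc 1 n, (l:ℝ) ≤ (n:ℝ)^2 := by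
      calc ∑ l ∈ Finset.Icc 1 n, (l:ℝ) ≤ ∑ l ∈ Finset.Icc 1 n, (n:ℝ) :=
            Finset.sum_le_sum fun l hl => by exact_mod_cast (Finset.mem_Icc.mp hl).2
        _ = (n:ℝ) * (n:ℝ) := by rw [Finset.sum_const, hcard, nsmul_eq_mul]
        _ ≤ (n:ℝ)^2 := by ring_nf; exact le_refl _
    calc (∏ l ∈ Finset.Icc 1 n, (Polynomial.X + Polynomial.C ((l:ℝ)⁻¹))).coeff ((n - α) + 1)
        ≤ (∑ l ∈ Finset.Icc 1 n, (l:ℝ)) * _ := hr (n - α)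
      _ ≤ (n:ℝ)^2 * _ := mul_le_mul_of_nonneg_right hsum (h0 _)


lemma Dnonneg (n : ℕ) (ε : ℝ) (hε : 0 < ε) (l : ℕ) : 0 ≤ Dcoeff n ε l := by
  unfold Dcoeff
  have : (0:ℝ) ≤ 2 + (2 + ε) * l := by positivity
  positivity

lemma Dratio (n : ℕ) (hn : 2 ≤ n) (ε : ℝ) (hε : 0 < ε) (l : ℕ) (hl : 1 ≤ l) :
    Dcoeff n ε (l+1) ≤ 3 * (n:ℝ)^2 * Dcoeff n ε l := by
  set N := n + n ^ 2 - 1 with hN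
  have hlR : (1:ℝ) ≤ (l:ℝ) := by exact_mod_cast hl
  have hA : 2 + (2 + ε) * ((l:ℕ):ℝ) + (2 + ε) ≤ 2 * (2 + (2 + ε) * l) := by nlinarith
  have hch : 2 * N.choose (l+1) ≤ N * N.choose l := by
    have h := Nat.choose_succ_right_eq N l
    have h2 : 2 * N.choose (l+1) ≤ (l+1) * N.choose (l+1) :=
      Nat.mul_le_mul_right _ (by omega)
    have h3 : N.choose l * (N - l) ≤ N.choose l * N := Nat.mul_le_mul_left _ (Nat.sub_le _ _)
    calc 2 * N.choose (l+1) ≤ (l+1) * N.choose (l+1) := h2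
      _ = N.choose (l+1) * (l+1) := Nat.mul_comm _ _
      _ = N.choose l * (N - l) := h
      _ ≤ N.choose l * N := h3
      _ = N * N.choose l := Nat.mul_comm _ _
  have hchR : 2 * ((N.choose (l+1) : ℝ)) ≤ (N:ℝ) * N.choose l := by exact_mod_cast hch
  have hNR : 2 * (N:ℝ) ≤ 3 * (n:ℝ)^2 := by
    have : 2 * N ≤ 3 * n^2 := by nlinarith [Nat.sub_le (n + n^2) 1]
    exact_mod_cast this
  have hpow : (2:ℝ) ^ ((l+1) - 1) = 2 * 2 ^ (l - 1) := by
    have : (l + 1) - 1 = (l - 1) + 1 := by omega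
    rw [this, pow_succ]; ring
  unfold Dcoeff
  rw [hpow]
  push_cast
  have hc0 : (0:ℝ) ≤ (N.choose l : ℝ) := by positivity
  have hc0' : (0:ℝ) ≤ (N.choose (l+1) : ℝ) := by positivity
  have hp0 : (0:ℝ) ≤ (2:ℝ) ^ (l-1) := by positivity
  have hA0 : (0:ℝ) ≤ 2 + (2 + ε) * l := by positivity
  have hN0 : (0:ℝ) ≤ (N:ℝ) := by positivity
  nlinarith [mul_nonneg (mul_nonneg hA0 hc0) hp0, mul_nonneg hA0 hp0,
    mul_le_mul_of_nonneg_right hA (mul_nonneg hc0' hp0),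
    mul_le_mul_of_nonneg_right hchR hp0,
    mul_le_mul_of_nonneg_right (mul_le_mul_of_nonneg_left hchR hA0) hp0,
    mul_le_mul_of_nonneg_right hNR (mul_nonneg (mul_nonneg hA0 hc0) hp0)]

lemma sum_Icc_shift (m : ℕ) (f : ℕ → ℝ) :
    ∑ l ∈ Finset.Icc 1 (m+1), f l = f 1 + ∑ i ∈ Finset.Icc 1 m, f (i+1) := by
  have himg : Finset.Icc 1 (m+1) = Finset.image (· + 1) (Finset.Icc 0 m) := by
    ext x; simp only [Finset.mem_Icc, Finset.mem_image]
    constructor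
    · intro h; exact ⟨x - 1, by omega, by omega⟩
    · rintro ⟨a, ha, rfl⟩; omega
  rw [himg, Finset.sum_image (by intro a _ b _ h; simp only at h; omega)]
  have h2 : Finset.Icc 0 m = insert 0 (Finset.Icc 1 m) := by
    ext x; simp only [Finset.mem_Icc, Finset.mem_insert]; omega
  rw [h2, Finset.sum_insert (by simp)]


theorem stmt15 (n : ℕ) (hn : 2 ≤ n) (ε : ℝ) (hε : 0 < ε) :
    Rcoeff n ε (n - 1) ≤ 9 * (n : ℝ) ^ 4 * (1 + ε / 4) * Rcoeff n ε n ∧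
    ∀ α : ℕ, 1 ≤ α → α ≤ n - 1 →
      Rcoeff n ε (α - 1) ≤ (27 / 2) * (n : ℝ) ^ 4 * Rcoeff n ε α := by
  obtain ⟨hB0, hBr⟩ := Bprops n
  obtain ⟨hC0, hCr⟩ := Cprops n (by omega)
  have hnR : (2:ℝ) ≤ (n:ℝ) := by exact_mod_cast hn
  have hBr' : ∀ γ, Bcoeff n (γ+1) ≤ 2 * (n:ℝ)^2 * Bcoeff n γ := by
    intro γ
    refine (hBr γ).trans ?_
    have h := hB0 γ
    nlinarith [mul_nonneg (mul_nonneg (by linarith : (0:ℝ) ≤ (n:ℝ)) (by linarith : (0:ℝ) ≤ (n:ℝ) - 2)) h]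
  have hD0 : ∀ l, 0 ≤ Dcoeff n ε l := Dnonneg n ε hε
  -- nonnegativity of the S-sums
  have hS0 : ∀ m : ℕ, 0 ≤ Bcoeff n m + ∑ l ∈ Finset.Icc 1 m, Dcoeff n ε l * Bcoeff n (m - l) := by
    intro m
    have : 0 ≤ ∑ l ∈ Finset.Icc 1 m, Dcoeff n ε l * Bcoeff n (m - l) :=
      Finset.sum_nonneg fun l _ => mul_nonneg (hD0 l) (hB0 _)
    linarith [hB0 m]
  constructor
  · -- first inequality
    have h1 : n - (n-1) = 1 := by omega
    have hRn1 : Rcoeff n ε (n-1)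
        = Ccoeff n (n-1) * (Bcoeff n 1 + Dcoeff n ε 1 * Bcoeff n 0) := by
      rw [Rcoeff, h1]
      simp [Finset.Icc_self]
    have hRn : Rcoeff n ε n = Ccoeff n n * Bcoeff n 0 := by
      rw [Rcoeff, Nat.sub_self]
      simp
    have hD1 : Dcoeff n ε 1 = (4 + ε) * ((n:ℝ) + (n:ℝ)^2 - 1) := by
      rw [Dcoeff]
      have : ((n + n^2 - 1 : ℕ) : ℝ) = (n:ℝ) + (n:ℝ)^2 - 1 := by
        have h : 1 ≤ n + n^2 := by nlinarith
        push_cast [Nat.cast_sub h]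
        ring
      rw [Nat.choose_one_right, this]
      push_cast
      ring
    have hkey : Bcoeff n 1 + Dcoeff n ε 1 * Bcoeff n 0
        ≤ (2 * (n:ℝ)^2 + (4 + ε) * ((n:ℝ) + (n:ℝ)^2 - 1)) * Bcoeff n 0 := by
      have hb := hBr' 0
      rw [hD1]
      nlinarith [hB0 0]
    have hC : Ccoeff n (n-1) ≤ (n:ℝ)^2 * Ccoeff n n := by
      have := hCr n (by omega) le_rfl
      simpa using this
    have hmul : Rcoeff n ε (n-1) ≤ ((n:ℝ)^2 * Ccoeff n n)
        * ((2 * (n:ℝ)^2 + (4 + ε) * ((n:ℝ) + (n:ℝ)^2 - 1)) * Bcoeff n 0) := by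
      rw [hRn1]
      refine mul_le_mul hC hkey ?_ (mul_nonneg (by positivity) (hC0 n))
      have := mul_nonneg (hD0 1) (hB0 0)
      linarith [hB0 1]
    have hpoly : (n:ℝ)^2 * (2 * (n:ℝ)^2 + (4 + ε) * ((n:ℝ) + (n:ℝ)^2 - 1))
        ≤ 9 * (n:ℝ)^4 * (1 + ε / 4) := by
      have hh1 : 2 * (n:ℝ)^3 ≤ (n:ℝ)^4 := by
        nlinarith [mul_nonneg (pow_nonneg (by linarith : (0:ℝ) ≤ (n:ℝ)) 3)
          (by linarith : (0:ℝ) ≤ (n:ℝ) - 2)]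
      nlinarith [hh1, mul_le_mul_of_nonneg_left hh1 hε.le, hε.le, sq_nonneg (n:ℝ),
        mul_nonneg (mul_nonneg hε.le (sq_nonneg (n:ℝ))) (sq_nonneg (n:ℝ))]
    rw [hRn]
    have hcb : 0 ≤ Ccoeff n n * Bcoeff n 0 := mul_nonneg (hC0 n) (hB0 0)
    nlinarith [mul_le_mul_of_nonneg_right hpoly hcb]
  · -- second inequality
    intro α hα1 hαn
    set m := n - α with hm
    have hm1 : 1 ≤ m := by omega
    have hm' : n - (α - 1) = m + 1 := by omega
    have hRa1 : Rcoeff n ε (α-1)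
        = Ccoeff n (α-1) * (Bcoeff n (m+1)
          + ∑ l ∈ Finset.Icc 1 (m+1), Dcoeff n ε l * Bcoeff n (m+1-l)) := by
      rw [Rcoeff, hm']
    have hRa : Rcoeff n ε α
        = Ccoeff n α * (Bcoeff n m
          + ∑ l ∈ Finset.Icc 1 m, Dcoeff n ε l * Bcoeff n (m-l)) := by
      rw [Rcoeff, ← hm]
    have hsplit : ∑ l ∈ Finset.Icc 1 (m+1), Dcoeff n ε l * Bcoeff n (m+1-l)
        = Dcoeff n ε 1 * Bcoeff n m
          + ∑ i ∈ Finset.Icc 1 m, Dcoeff n ε (i+1) * Bcoeff n (m-i) := by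
      rw [sum_Icc_shift m (fun l => Dcoeff n ε l * Bcoeff n (m+1-l))]
      simp [Nat.add_sub_add_right]
    set So := ∑ l ∈ Finset.Icc 1 m, Dcoeff n ε l * Bcoeff n (m-l) with hSo
    have hSo0 : 0 ≤ So := Finset.sum_nonneg fun l _ => mul_nonneg (hD0 l) (hB0 _)
    have t1 : Bcoeff n (m+1) ≤ 2 * (n:ℝ)^2 * Bcoeff n m := hBr' m
    have t2 : Dcoeff n ε 1 * Bcoeff n m ≤ 2 * (n:ℝ)^2 * So := by
      have hBm : Bcoeff n m ≤ 2 * (n:ℝ)^2 * Bcoeff n (m-1) := by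
        have := hBr' (m-1)
        have hmm : m - 1 + 1 = m := by omega
        rwa [hmm] at this
      have h4 : Dcoeff n ε 1 * Bcoeff n (m-1) ≤ So := by
        have h1m : (1:ℕ) ∈ Finset.Icc 1 m := by simp [Finset.mem_Icc]; omega
        have := Finset.single_le_sum
          (f := fun l => Dcoeff n ε l * Bcoeff n (m-l))
          (fun l _ => mul_nonneg (hD0 l) (hB0 _)) h1m
        simpa using this
      calc Dcoeff n ε 1 * Bcoeff n m ≤ Dcoeff n ε 1 * (2 * (n:ℝ)^2 * Bcoeff n (m-1)) :=
            mul_le_mul_of_nonneg_left hBm (hD0 1)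
        _ = 2 * (n:ℝ)^2 * (Dcoeff n ε 1 * Bcoeff n (m-1)) := by ring
        _ ≤ 2 * (n:ℝ)^2 * So := by
            refine mul_le_mul_of_nonneg_left h4 (by positivity)
    have t3 : ∑ i ∈ Finset.Icc 1 m, Dcoeff n ε (i+1) * Bcoeff n (m-i)
        ≤ 3 * (n:ℝ)^2 * So := by
      rw [hSo, Finset.mul_sum]
      refine Finset.sum_le_sum fun i hi => ?_
      have hi1 : 1 ≤ i := (Finset.mem_Icc.mp hi).1
      have := Dratio n hn ε hε i hi1
      calc Dcoeff n ε (i+1) * Bcoeff n (m-i)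
          ≤ (3 * (n:ℝ)^2 * Dcoeff n ε i) * Bcoeff n (m-i) :=
            mul_le_mul_of_nonneg_right this (hB0 _)
        _ = 3 * (n:ℝ)^2 * (Dcoeff n ε i * Bcoeff n (m-i)) := by ring
    have hSnew : Bcoeff n (m+1) + ∑ l ∈ Finset.Icc 1 (m+1), Dcoeff n ε l * Bcoeff n (m+1-l)
        ≤ 7 * (n:ℝ)^2 * (Bcoeff n m + So) := by
      rw [hsplit]
      have := hB0 m
      nlinarith [t1, t2, t3]
    have hC : Ccoeff n (α-1) ≤ (n:ℝ)^2 * Ccoeff n α := hCr α hα1 (by omega)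
    have hSnew0 : 0 ≤ Bcoeff n (m+1)
        + ∑ l ∈ Finset.Icc 1 (m+1), Dcoeff n ε l * Bcoeff n (m+1-l) := hS0 (m+1)
    have hmul : Rcoeff n ε (α-1)
        ≤ ((n:ℝ)^2 * Ccoeff n α) * (7 * (n:ℝ)^2 * (Bcoeff n m + So)) := by
      rw [hRa1]
      exact mul_le_mul hC hSnew hSnew0 (mul_nonneg (by positivity) (hC0 α))
    rw [hRa]
    have hRa0 : 0 ≤ Ccoeff n α * (Bcoeff n m + So) :=
      mul_nonneg (hC0 α) (by linarith [hSo0, hB0 m])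
    calc Rcoeff n ε (α-1)
        ≤ (n:ℝ)^2 * Ccoeff n α * (7 * (n:ℝ)^2 * (Bcoeff n m + So)) := hmul
      _ = 7 * (n:ℝ)^4 * (Ccoeff n α * (Bcoeff n m + So)) := by ring
      _ ≤ 27/2 * (n:ℝ)^4 * (Ccoeff n α * (Bcoeff n m + So)) := by
          refine mul_le_mul_of_nonneg_right ?_ hRa0
          nlinarith [pow_nonneg (by linarith : (0:ℝ) ≤ (n:ℝ)) 4]
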